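/- arXiv:1906.11636 — 5 statements merged into one kernel-verified Lean document; each statement's English description precedes it below -/
import Mathlib

section
/- Let y ∈ ℝ with y ≠ 0, and let s, t ∈ {−1, 1}. Then the set H = {(w,x) ∈ ℝ² : s·w·x ≥ |y| and t·w ≥ 0} is convex, and H equals the closed convex hull of the hyperbola branch {(w,x) ∈ ℝ² : s·w·x = |y| and t·w ≥ 0}. -/
private lemma hb_key (c u1 v1 u2 v2 : ℝ) (hc : 0 < c) (hu1 : 0 < u1) (hu2 : 0 < u2)
    (h1 : c ≤ u1 * v1) (h2 : c ≤ u2 * v2) : 2 * c ≤ u1 * v2 + u2 * v1 := by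
  nlinarith [mul_pos hu1 hu2, sq_nonneg (u1 - u2),
    mul_nonneg (sq_nonneg u1) (sub_nonneg.2 h2),
    mul_nonneg (sq_nonneg u2) (sub_nonneg.2 h1)]

private lemma hb_conv (c u1 v1 u2 v2 a b : ℝ) (hc : 0 < c) (hu1 : 0 < u1) (hu2 : 0 < u2)
    (h1 : c ≤ u1 * v1) (h2 : c ≤ u2 * v2) (ha : 0 ≤ a) (hb : 0 ≤ b) (hab : a + b = 1) :
    c ≤ (a * u1 + b * u2) * (a * v1 + b * v2) := by
  have key := hb_key c u1 v1 u2 v2 hc hu1 hu2 h1 h2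
  obtain rfl : b = 1 - a := by linarith
  nlinarith [mul_nonneg (mul_nonneg ha ha) (sub_nonneg.2 h1),
    mul_nonneg (mul_nonneg hb hb) (sub_nonneg.2 h2),
    mul_nonneg (mul_nonneg ha hb) (sub_nonneg.2 key)]

theorem hyperbola_branch_convex_hull (y s t : ℝ) (hy : y ≠ 0)
    (hs : s = -1 ∨ s = 1) (ht : t = -1 ∨ t = 1) :
    let H : Set (ℝ × ℝ) := {p | s * p.1 * p.2 ≥ |y| ∧ t * p.1 ≥ 0}
    let A : Set (ℝ × ℝ) := {p | s * p.1 * p.2 = |y| ∧ t * p.1 ≥ 0}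
    Convex ℝ H ∧ closure (convexHull ℝ A) = H := by
  intro H A
  have hc : 0 < |y| := abs_pos.2 hy
  set c := |y| with hcdef
  have hs2 : s * s = 1 := by rcases hs with h | h <;> simp [h]
  have ht2 : t * t = 1 := by rcases ht with h | h <;> simp [h]
  have htne : t ≠ 0 := by rcases ht with h | h <;> simp [h]
  -- positivity of t * p.1 for points of H
  have hpos : ∀ p : ℝ × ℝ, p ∈ H → 0 < t * p.1 := by
    intro p hp
    rcases hp with ⟨hp1, hp2⟩
    rcases lt_or_eq_of_le hp2 with h | h
    · exact h
    · exfalso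
      have hp0 : p.1 = 0 := by
        by_contra hne
        exact (mul_ne_zero htne hne) h.symm
      rw [hp0] at hp1
      simp at hp1
      exact hy hp1
  have hconv : Convex ℝ H := by
    intro p hp q hq a b ha hb hab
    have hup : 0 < t * p.1 := hpos p hp
    have huq : 0 < t * q.1 := hpos q hq
    have h1 : c ≤ (t * p.1) * (s * t * p.2) := by
      have := hp.1
      nlinarith [hp.1, ht2]
    have h2 : c ≤ (t * q.1) * (s * t * q.2) := by
      nlinarith [hq.1, ht2]
    constructor
    · show s * (a • p + b • q).1 * (a • p + b • q).2 ≥ c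
      have hmain := hb_conv c (t * p.1) (s * t * p.2) (t * q.1) (s * t * q.2) a b hc hup huq h1 h2 ha hb hab
      have hrw : (a * (t * p.1) + b * (t * q.1)) * (a * (s * t * p.2) + b * (s * t * q.2))
          = s * (a * p.1 + b * q.1) * (a * p.2 + b * q.2) := by
        linear_combination (s * (a * p.1 + b * q.1) * (a * p.2 + b * q.2)) * ht2
      simp only [Prod.fst_add, Prod.snd_add, Prod.smul_fst, Prod.smul_snd, smul_eq_mul]
      rw [hrw] at hmain
      exact hmain
    · show t * (a • p + b • q).1 ≥ 0
      simp only [Prod.fst_add, Prod.smul_fst, smul_eq_mul]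
      have : t * (a * p.1 + b * q.1) = a * (t * p.1) + b * (t * q.1) := by ring
      rw [this]
      positivity
  refine ⟨hconv, ?_⟩
  apply le_antisymm
  · -- closure hull A ⊆ H
    have hAH : A ⊆ H := fun p hp => ⟨hp.1.ge, hp.2⟩
    have hHclosed : IsClosed H := by
      have : H = {p : ℝ × ℝ | c ≤ s * p.1 * p.2} ∩ {p : ℝ × ℝ | 0 ≤ t * p.1} := rfl
      rw [this]
      exact (isClosed_le continuous_const (by fun_prop)).inter
        (isClosed_le continuous_const (by fun_prop))
    exact closure_minimal (convexHull_min hAH hconv) hHclosed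
  · -- H ⊆ closure hull A
    intro p hp
    apply subset_closure
    have hup : 0 < t * p.1 := hpos p hp
    set u := t * p.1 with hu_def
    set v := s * t * p.2 with hv_def
    have huv : c ≤ u * v := by
      have he : u * v = s * p.1 * p.2 := by
        rw [hu_def, hv_def]; linear_combination (s * p.1 * p.2) * ht2
      rw [he]; exact hp.1
    have hv : 0 < v := by
      rcases le_or_gt v 0 with h | h
      · nlinarith
      · exact h
    have hnn : 0 ≤ u ^ 2 - c * u / v := by
      have heq : u ^ 2 - c * u / v = u * (u * v - c) / v := by field_simp
      rw [heq]
      apply div_nonneg (mul_nonneg hup.le (by linarith)) hv.le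
    set d := Real.sqrt (u ^ 2 - c * u / v) with hd_def
    have hd0 : 0 ≤ d := Real.sqrt_nonneg _
    have hd2 : d ^ 2 = u ^ 2 - c * u / v := Real.sq_sqrt hnn
    set u1 := u - d with hu1_def
    set u2 := u + d with hu2_def
    have hu2pos : 0 < u2 := by positivity
    have hprod : u1 * u2 = c * u / v := by
      have : u1 * u2 = u ^ 2 - d ^ 2 := by ring
      rw [this, hd2]; ring
    have hu1pos : 0 < u1 := by
      have h1 : 0 < u1 * u2 := by rw [hprod]; positivity
      nlinarith
    set p1 : ℝ × ℝ := (t * u1, s * t * (c / u1)) with hp1_def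
    set p2 : ℝ × ℝ := (t * u2, s * t * (c / u2)) with hp2_def
    have hp1A : p1 ∈ A := by
      constructor
      · show s * (t * u1) * (s * t * (c / u1)) = c
        rw [show s * (t * u1) * (s * t * (c / u1)) = (s * s) * (t * t) * c * (u1 / u1) by ring,
          hs2, ht2, div_self hu1pos.ne']; ring
      · show t * (t * u1) ≥ 0
        have : t * (t * u1) = u1 := by linear_combination u1 * ht2
        rw [this]; exact hu1pos.le
    have hp2A : p2 ∈ A := by
      constructor
      · show s * (t * u2) * (s * t * (c / u2)) = c
        rw [show s * (t * u2) * (s * t * (c / u2)) = (s * s) * (t * t) * c * (u2 / u2) by ring,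
          hs2, ht2, div_self hu2pos.ne']; ring
      · show t * (t * u2) ≥ 0
        have : t * (t * u2) = u2 := by linear_combination u2 * ht2
        rw [this]; exact hu2pos.le
    have hsum : c / u1 + c / u2 = 2 * v := by
      rw [div_add_div _ _ hu1pos.ne' hu2pos.ne', div_eq_iff (by positivity)]
      have h2u : u1 + u2 = 2 * u := by rw [hu1_def, hu2_def]; ring
      rw [hprod]
      field_simp
      linear_combination (c * v) * h2u
    have hseg : p ∈ segment ℝ p1 p2 := by
      refine ⟨1/2, 1/2, by norm_num, by norm_num, by norm_num, ?_⟩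
      have hfst : (1/2 : ℝ) * p1.1 + (1/2 : ℝ) * p2.1 = p.1 := by
        show (1/2 : ℝ) * (t * u1) + (1/2 : ℝ) * (t * u2) = p.1
        rw [hu1_def, hu2_def, hu_def]
        linear_combination p.1 * ht2
      have hsnd : (1/2 : ℝ) * p1.2 + (1/2 : ℝ) * p2.2 = p.2 := by
        show (1/2 : ℝ) * (s * t * (c / u1)) + (1/2 : ℝ) * (s * t * (c / u2)) = p.2
        have : (1/2 : ℝ) * (s * t * (c / u1)) + (1/2 : ℝ) * (s * t * (c / u2))
            = s * t * ((c / u1 + c / u2) / 2) := by ring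
        rw [this, hsum]
        rw [hv_def]
        linear_combination p.2 * (t * t) * hs2 + p.2 * ht2
      ext
      · simpa using hfst
      · simpa using hsnd
    exact segment_subset_convexHull hp1A hp2A hseg
end

section
/- Let y, s, t, α ∈ ℝ with α ≥ 0. Define γ : ℝ² → ℝ by γ(w,x) = 1 if α > 1 and √(4|y| + (w − s·x)²) − t(w + s·x) ≤ 0, and γ(w,x) = α otherwise. Then the function f : ℝ² → ℝ given by f(w,x) = γ(w,x)·(√(4|y| + (w − s·x)²) − t(w + s·x)) is convex on ℝ². -/
/-!
The bracket `g(w, x) = √(4|y| + (w - s x)²) - t (w + s x)` is convex: `√(c + u²)` is the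
norm of the affine path `u ↦ √c + u i` in `ℂ`, here composed with a linear form, and a linear
form is subtracted. For `α > 1` the product `γ g` equals `max g (α g)`, a maximum of convex
functions; otherwise it is `α g` with `α ≥ 0`.
-/

noncomputable def gammaFn (y s t α : ℝ) (w x : ℝ) : ℝ :=
  if α > 1 ∧ Real.sqrt (4 * |y| + (w - s * x) ^ 2) - t * (w + s * x) ≤ 0 then 1 else α

open Set Complex

lemma convexOn_sqrt_add_sq {c : ℝ} (hc : 0 ≤ c) :
    ConvexOn ℝ univ (fun u : ℝ => √(c + u ^ 2)) := by
  refine (convexOn_univ_norm.comp_affineMap (AffineMap.lineMap (√c : ℂ) (√c + I))).congr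
    fun u _ => ?_
  simp only [Function.comp_apply, AffineMap.lineMap_apply_module', add_sub_cancel_left, real_smul]
  rw [add_comm, norm_add_mul_I, Real.sq_sqrt hc]

lemma convexOn_sqrt_add_sq_sub_linear {E : Type*} [AddCommGroup E] [Module ℝ E] {c : ℝ}
    (hc : 0 ≤ c) (ℓ₁ ℓ₂ : E →ₗ[ℝ] ℝ) :
    ConvexOn ℝ univ (fun x => √(c + ℓ₁ x ^ 2) - ℓ₂ x) :=
  ((convexOn_sqrt_add_sq hc).comp_linearMap ℓ₁).sub (ℓ₂.concaveOn convex_univ)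

lemma ite_nonpos_mul_eq_max {a c : ℝ} (hc : 1 ≤ c) :
    (if a ≤ 0 then 1 else c) * a = max a (c * a) := by
  split_ifs with ha
  · rw [one_mul, max_eq_left (by nlinarith)]
  · rw [max_eq_right (by nlinarith)]

lemma ConvexOn.ite_nonpos_mul {E : Type*} [AddCommGroup E] [Module ℝ E] {s : Set E}
    {f : E → ℝ} (hf : ConvexOn ℝ s f) {c : ℝ} (hc : 1 ≤ c) :
    ConvexOn ℝ s (fun x => (if f x ≤ 0 then 1 else c) * f x) := by
  simp_rw [ite_nonpos_mul_eq_max hc]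
  exact hf.sup (hf.smul (by linarith))

theorem branchhull_constraint_convex (y s t α : ℝ) (hα : 0 ≤ α) :
    ConvexOn ℝ (Set.univ : Set (ℝ × ℝ))
      (fun p => gammaFn y s t α p.1 p.2 *
        (Real.sqrt (4 * |y| + (p.1 - s * p.2) ^ 2) - t * (p.1 + s * p.2))) := by
  have hg : ConvexOn ℝ univ
      (fun p : ℝ × ℝ => √(4 * |y| + (p.1 - s * p.2) ^ 2) - t * (p.1 + s * p.2)) :=
    convexOn_sqrt_add_sq_sub_linear (by positivity)
      (LinearMap.fst ℝ ℝ ℝ - s • LinearMap.snd ℝ ℝ ℝ)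
      (t • (LinearMap.fst ℝ ℝ ℝ + s • LinearMap.snd ℝ ℝ ℝ))
  by_cases hα1 : 1 < α
  · simpa only [gammaFn, gt_iff_lt, hα1, true_and] using hg.ite_nonpos_mul hα1.le
  · simpa only [gammaFn, gt_iff_lt, hα1, false_and, if_false, smul_eq_mul] using hg.smul hα
end

section
/- Let b ∈ ℝ^K, c ∈ ℝ^N, ĥ ∈ ℝ^K, m̂ ∈ ℝ^N, and set ŵ = bᵀĥ, x̂ = cᵀm̂ and ŷ = ŵ·x̂, and assume ŷ ≠ 0. Let s = sign(ŷ), t = sign(ŵ), and α = t(ŵ + s·x̂)/2. Then the function ĝ : ℝ^K × ℝ^N → ℝ defined by ĝ(h,m) = α·(√(4|ŷ| + (bᵀh − s·cᵀm)²) − t(bᵀh + s·cᵀm)) is differentiable at (ĥ, m̂) with gradient ∇ĝ(ĥ, m̂) = −s·(x̂·b, ŵ·c) ∈ ℝ^{K+N}; in particular ĝ(ĥ, m̂) = 0. -/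
open Real

/-!
Write `s = sign (ŵ x̂)` and `t = sign ŵ`. Since `s ŵ x̂ = |ŷ|`, the radicand at the base point is
`4 s ŵ x̂ + (ŵ - s x̂)² = (ŵ + s x̂)²`, and `ŵ` and `s x̂` have the same sign, so the square root equals
`ρ = t (ŵ + s x̂) = |ŵ| + |x̂| > 0`. Hence `α = ρ / 2`, which makes `ĝ` vanish at the base point and
turns the chain rule into plain algebra in `t² = 1`.
-/

namespace Real

theorem sign_mul_self_sign {r : ℝ} (hr : r ≠ 0) : sign r * sign r = 1 := by
  rcases sign_apply_eq_of_ne_zero r hr with h | h <;> rw [h] <;> norm_num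

theorem sign_mul_eq_abs_of_mul_pos {a b : ℝ} (hab : 0 < a * b) : sign a * b = |b| := by
  rcases pos_and_pos_or_neg_and_neg_of_mul_pos hab with ⟨ha, hb⟩ | ⟨ha, hb⟩
  · rw [sign_of_pos ha, abs_of_pos hb, one_mul]
  · rw [sign_of_neg ha, abs_of_neg hb, neg_one_mul]

end Real

/-- `ĝ` as a function of `p = bᵀh` and `q = cᵀm`, with base values `w = ŵ`, `x = x̂`. -/
noncomputable def ghat (w x p q : ℝ) : ℝ :=
  sign w * (w + sign (w * x) * x) / 2 *
    (√(4 * |w * x| + (p - sign (w * x) * q) ^ 2) - sign w * (p + sign (w * x) * q))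

section ghat

variable {w x : ℝ}

theorem add_sign_mul_mul_pos (hwx : w * x ≠ 0) : 0 < w * (w + sign (w * x) * x) := by
  have hs : sign (w * x) * (w * x) = |w * x| :=
    sign_mul_eq_abs_of_mul_pos (mul_self_pos.mpr hwx)
  nlinarith [abs_pos.mpr hwx, mul_self_pos.mpr (left_ne_zero_of_mul hwx)]

theorem sign_mul_add_sign_mul_eq_abs (hwx : w * x ≠ 0) :
    sign w * (w + sign (w * x) * x) = |w + sign (w * x) * x| :=
  sign_mul_eq_abs_of_mul_pos (add_sign_mul_mul_pos hwx)

theorem sqrt_four_abs_mul_add_sq (hwx : w * x ≠ 0) :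
    √(4 * |w * x| + (w - sign (w * x) * x) ^ 2) = sign w * (w + sign (w * x) * x) := by
  have hs : sign (w * x) * (w * x) = |w * x| :=
    sign_mul_eq_abs_of_mul_pos (mul_self_pos.mpr hwx)
  rw [← hs, show 4 * (sign (w * x) * (w * x)) + (w - sign (w * x) * x) ^ 2
      = (w + sign (w * x) * x) ^ 2 by ring, sqrt_sq_eq_abs, sign_mul_add_sign_mul_eq_abs hwx]

theorem ghat_self (hwx : w * x ≠ 0) : ghat w x w x = 0 := by
  rw [ghat, sqrt_four_abs_mul_add_sq hwx, sub_self, mul_zero]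

theorem hasFDerivAt_ghat {E : Type*} [NormedAddCommGroup E] [NormedSpace ℝ E]
    {P Q : E → ℝ} {P' Q' : E →L[ℝ] ℝ} {v : E} (hP : HasFDerivAt P P' v) (hQ : HasFDerivAt Q Q' v)
    (hPv : P v = w) (hQv : Q v = x) (hwx : w * x ≠ 0) :
    HasFDerivAt (fun u => ghat w x (P u) (Q u))
      ((-(sign (w * x) * x)) • P' - (sign (w * x) * w) • Q') v := by
  have hsqrt := sqrt_four_abs_mul_add_sq hwx
  set s := sign (w * x)
  set t := sign w
  have hw : w + s * x ≠ 0 := right_ne_zero_of_mul (add_sign_mul_mul_pos hwx).ne'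
  have ht : t * t = 1 := sign_mul_self_sign (left_ne_zero_of_mul hwx)
  have ht0 : t ≠ 0 := left_ne_zero_of_mul_eq_one ht
  have hr : 4 * |w * x| + (P v - s * Q v) ^ 2 ≠ 0 := by
    rw [hPv, hQv]; positivity
  have hradical := (((hP.sub (hQ.const_mul s)).pow 2).const_add (4 * |w * x|)).sqrt hr
  have hg := (hradical.sub ((hP.add (hQ.const_mul s)).const_mul t)).const_mul
    (t * (w + s * x) / 2)
  refine hg.congr_fderiv ?_
  simp only [Pi.sub_apply, hPv, hQv, hsqrt]
  ext u
  simp only [smul_apply, sub_apply, add_apply, smul_eq_mul, nsmul_eq_mul]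
  field_simp
  linear_combination (-2 * (w + s * x) * (P' u + s * Q' u)) * ht

end ghat

section EuclideanSum

variable {ι κ : Type*} [Fintype ι] [Fintype κ]

theorem hasFDerivAt_sum_mul_inl (b : ι → ℝ) (v : EuclideanSpace ℝ (ι ⊕ κ)) :
    HasFDerivAt (fun u : EuclideanSpace ℝ (ι ⊕ κ) => ∑ i, b i * u (Sum.inl i))
      (innerSL ℝ (WithLp.toLp 2 (Sum.elim b 0))) v := by
  convert (innerSL ℝ (WithLp.toLp 2 (Sum.elim b 0) : EuclideanSpace ℝ (ι ⊕ κ))).hasFDerivAt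
    using 1
  ext u
  simp [PiLp.inner_apply, Fintype.sum_sum_type, mul_comm]

theorem hasFDerivAt_sum_mul_inr (c : κ → ℝ) (v : EuclideanSpace ℝ (ι ⊕ κ)) :
    HasFDerivAt (fun u : EuclideanSpace ℝ (ι ⊕ κ) => ∑ j, c j * u (Sum.inr j))
      (innerSL ℝ (WithLp.toLp 2 (Sum.elim 0 c))) v := by
  convert (innerSL ℝ (WithLp.toLp 2 (Sum.elim 0 c) : EuclideanSpace ℝ (ι ⊕ κ))).hasFDerivAt
    using 1
  ext u
  simp [PiLp.inner_apply, Fintype.sum_sum_type, mul_comm]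

end EuclideanSum

theorem gradient_of_ghat {K N : ℕ} (b : Fin K → ℝ) (c : Fin N → ℝ)
    (hh : Fin K → ℝ) (mh : Fin N → ℝ)
    (hy : (∑ i, b i * hh i) * (∑ j, c j * mh j) ≠ 0) :
    let wh : ℝ := ∑ i, b i * hh i
    let xh : ℝ := ∑ j, c j * mh j
    let yh : ℝ := wh * xh
    let s : ℝ := Real.sign yh
    let t : ℝ := Real.sign wh
    let α : ℝ := t * (wh + s * xh) / 2
    let g : EuclideanSpace ℝ (Fin K ⊕ Fin N) → ℝ := fun v =>
      α * (Real.sqrt (4 * |yh| + ((∑ i, b i * v (Sum.inl i)) - s * ∑ j, c j * v (Sum.inr j)) ^ 2)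
        - t * ((∑ i, b i * v (Sum.inl i)) + s * ∑ j, c j * v (Sum.inr j)))
    let pt : EuclideanSpace ℝ (Fin K ⊕ Fin N) := WithLp.toLp 2 (fun i => Sum.elim hh mh i)
    let grad : EuclideanSpace ℝ (Fin K ⊕ Fin N) := WithLp.toLp 2 (fun i =>
      Sum.elim (fun i => -s * (xh * b i)) (fun j => -s * (wh * c j)) i)
    HasGradientAt g grad pt ∧ g pt = 0 := by
  intro wh xh yh s t α g pt grad
  refine ⟨?_, ghat_self hy⟩
  have hg := hasFDerivAt_ghat (w := wh) (x := xh) (hasFDerivAt_sum_mul_inl b pt)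
    (hasFDerivAt_sum_mul_inr c pt) rfl rfl hy
  have hgrad : grad = (-(s * xh)) • WithLp.toLp 2 (Sum.elim b (0 : Fin N → ℝ))
      - (s * wh) • WithLp.toLp 2 (Sum.elim (0 : Fin K → ℝ) c) := by
    ext (i | j) <;> simp [grad] <;> ring
  rw [hasGradientAt_iff_hasFDerivAt, hgrad]
  refine hg.congr_fderiv ?_
  ext u
  simp only [InnerProductSpace.toDual_apply_apply, sub_apply, smul_apply, innerSL_apply_apply,
    inner_sub_left, inner_smul_left, smul_eq_mul, conj_trivial]
  rfl
end

section
/- Let (ĥ, m̂) ∈ ℝ^K × ℝ^N, let Γ_h ⊆ {1,…,K} and Γ_m ⊆ {1,…,N} be the supports of ĥ and m̂, let S₁ = |Γ_h| and S₂ = |Γ_m|, and let 𝒩 = span{(−ĥ, m̂)} ⊆ ℝ^{K+N}. Let ∂‖(ĥ,m̂)‖₁ = {g ∈ ℝ^{K+N} : ‖g‖_∞ ≤ 1, g agrees with sign(ĥ) on Γ_h and with sign(m̂) on Γ_m}. Then {(δh, δm) ∈ 𝒩^⊥ : ⟨g, (δh, δm)⟩ ≤ 0 for all g ∈ ∂‖(ĥ,m̂)‖₁}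 ⊆ {(δh, δm) ∈ 𝒩^⊥ : ‖(δh restricted to Γ_h^c, δm restricted to Γ_m^c)‖₁ ≤ √(S₁+S₂)·‖(δh restricted to Γ_h, δm restricted to Γ_m)‖₂}. -/
/-!
Testing against the subgradient that equals `sign ĥ`, `sign m̂` on the supports and the sign of
the direction itself off the supports turns `⟨g, δ⟩ ≤ 0` into
`‖δ off the supports‖₁ ≤ -⟨sign, δ on the supports⟩ ≤ ‖δ on the supports‖₁`,
and Cauchy–Schwarz bounds the last norm by `√(S₁ + S₂)` times the Euclidean one.
-/

open Finset
open scoped Classical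

noncomputable section

def l1norm {n : ℕ} (v : Fin n → ℝ) : ℝ := ∑ i, |v i|

def restr {n : ℕ} (Γ : Finset (Fin n)) (v : Fin n → ℝ) : Fin n → ℝ :=
  fun i => if i ∈ Γ then v i else 0

namespace Real

lemma sign_mul_self_eq_abs (x : ℝ) : sign x * x = |x| := by
  rcases lt_trichotomy x 0 with h | rfl | h
  · rw [sign_of_neg h, abs_of_neg h, neg_one_mul]
  · simp
  · rw [sign_of_pos h, abs_of_pos h, one_mul]

lemma abs_sign_le_one (x : ℝ) : |sign x| ≤ 1 := by
  rcases sign_apply_eq x with h | h | h <;> simp [h]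

lemma neg_abs_le_sign_mul (s x : ℝ) : -|x| ≤ sign s * x := by
  have : |sign s * x| ≤ |x| := by
    rw [abs_mul]
    exact mul_le_of_le_one_left (abs_nonneg x) (abs_sign_le_one s)
  linarith [neg_abs_le (sign s * x)]

end Real

lemma sum_restr_apply {n : ℕ} (Γ : Finset (Fin n)) (v : Fin n → ℝ) {f : ℝ → ℝ} (hf : f 0 = 0) :
    ∑ i, f (restr Γ v i) = ∑ i ∈ Γ, f (v i) := by
  simp only [restr, apply_ite f, hf, Finset.sum_ite_mem, univ_inter]

lemma l1norm_restr {n : ℕ} (Γ : Finset (Fin n)) (v : Fin n → ℝ) :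
    l1norm (restr Γ v) = ∑ i ∈ Γ, |v i| :=
  sum_restr_apply Γ v abs_zero

def alignedSubgrad {n : ℕ} (Γ : Finset (Fin n)) (s v : Fin n → ℝ) : Fin n → ℝ :=
  fun i => if i ∈ Γ then Real.sign (s i) else Real.sign (v i)

lemma abs_alignedSubgrad_le_one {n : ℕ} (Γ : Finset (Fin n)) (s v : Fin n → ℝ) (i : Fin n) :
    |alignedSubgrad Γ s v i| ≤ 1 := by
  unfold alignedSubgrad
  split <;> exact Real.abs_sign_le_one _

lemma sum_abs_compl_sub_sum_abs_le_sum_alignedSubgrad_mul {n : ℕ} (Γ : Finset (Fin n))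
    (s v : Fin n → ℝ) :
    ∑ i ∈ Γᶜ, |v i| - ∑ i ∈ Γ, |v i| ≤ ∑ i, alignedSubgrad Γ s v i * v i := by
  have hΓ : -∑ i ∈ Γ, |v i| ≤ ∑ i ∈ Γ, alignedSubgrad Γ s v i * v i := by
    rw [← sum_neg_distrib]
    refine sum_le_sum fun i hi => ?_
    simpa only [alignedSubgrad, if_pos hi] using Real.neg_abs_le_sign_mul (s i) (v i)
  have hΓc : ∑ i ∈ Γᶜ, alignedSubgrad Γ s v i * v i = ∑ i ∈ Γᶜ, |v i| :=
    sum_congr rfl fun i hi => by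
      rw [alignedSubgrad, if_neg (mem_compl.mp hi), Real.sign_mul_self_eq_abs]
  rw [← sum_add_sum_compl Γ, hΓc]
  linarith

lemma sum_abs_add_sum_abs_le_sqrt_mul_sqrt {ι κ : Type*} (s : Finset ι) (t : Finset κ)
    (x : ι → ℝ) (y : κ → ℝ) :
    ∑ i ∈ s, |x i| + ∑ j ∈ t, |y j| ≤
      √((#s : ℝ) + #t) * √(∑ i ∈ s, x i ^ 2 + ∑ j ∈ t, y j ^ 2) := by
  have hcs := sq_sum_le_card_mul_sum_sq (s := s.disjSum t) (f := Sum.elim (|x ·|) (|y ·|))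
  simp only [sum_disjSum, card_disjSum, Sum.elim_inl, Sum.elim_inr, sq_abs, Nat.cast_add]
    at hcs
  rw [← Real.sqrt_mul (by positivity)]
  exact Real.le_sqrt_of_sq_le hcs

theorem descent_direction_inclusion {K N : ℕ} (hh : Fin K → ℝ) (mh : Fin N → ℝ) :
    let Γh : Finset (Fin K) := univ.filter fun i => hh i ≠ 0
    let Γm : Finset (Fin N) := univ.filter fun j => mh j ≠ 0
    let S₁ : ℕ := Γh.card
    let S₂ : ℕ := Γm.card
    -- orthogonal complement of 𝒩 = span{(-ĥ, m̂)}
    let Nperp : Set ((Fin K → ℝ) × (Fin N → ℝ)) :=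
      {p | (∑ i, p.1 i * (-hh i)) + ∑ j, p.2 j * mh j = 0}
    let subgrad : Set ((Fin K → ℝ) × (Fin N → ℝ)) :=
      {g | (∀ i, |g.1 i| ≤ 1) ∧ (∀ j, |g.2 j| ≤ 1) ∧
        (∀ i ∈ Γh, g.1 i = Real.sign (hh i)) ∧ (∀ j ∈ Γm, g.2 j = Real.sign (mh j))}
    {p | p ∈ Nperp ∧ ∀ g ∈ subgrad, (∑ i, g.1 i * p.1 i) + (∑ j, g.2 j * p.2 j) ≤ 0} ⊆
      {p | p ∈ Nperp ∧
        l1norm (restr Γhᶜ p.1) + l1norm (restr Γmᶜ p.2) ≤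
          Real.sqrt ((S₁ : ℝ) + S₂) *
            Real.sqrt ((∑ i, (restr Γh p.1 i) ^ 2) + ∑ j, (restr Γm p.2 j) ^ 2)} := by
  intro Γh Γm S₁ S₂ Nperp subgrad p ⟨hperp, hdescent⟩
  refine ⟨hperp, ?_⟩
  have htest := hdescent (alignedSubgrad Γh hh p.1, alignedSubgrad Γm mh p.2)
    ⟨abs_alignedSubgrad_le_one _ _ _, abs_alignedSubgrad_le_one _ _ _,
      fun i hi => if_pos hi, fun j hj => if_pos hj⟩
  rw [l1norm_restr, l1norm_restr, sum_restr_apply (f := (· ^ 2)) _ _ (zero_pow two_ne_zero),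
    sum_restr_apply (f := (· ^ 2)) _ _ (zero_pow two_ne_zero)]
  linarith [sum_abs_compl_sub_sum_abs_le_sum_alignedSubgrad_mul Γh hh p.1,
    sum_abs_compl_sub_sum_abs_le_sum_alignedSubgrad_mul Γm mh p.2,
    sum_abs_add_sum_abs_le_sqrt_mul_sqrt Γh Γm p.1 p.2]
end
end

section
/- Let b ∈ ℝ^K and c ∈ ℝ^N be independent random vectors with i.i.d. N(0,1) entries, and let ĥ, δh ∈ ℝ^K and m̂, δm ∈ ℝ^N be fixed. Then E[(bᵀĥ·cᵀδm + bᵀδh·cᵀm̂)²] = ‖δm‖₂²·‖ĥ‖₂² + ‖m̂‖₂²·‖δh‖₂² + 2(δmᵀm̂)(δhᵀĥ). In particular, if δhᵀĥ = δmᵀm̂, then E[(bᵀĥ·cᵀδm + bᵀδh·cᵀm̂)²] ≥ min{‖ĥ‖₂², ‖m̂‖₂²}·(‖δh‖₂² + ‖δm‖₂²). -/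
/-!
Writing the random variable as `bᵀ A c` with `A = ĥ δmᵀ + δh m̂ᵀ`, its square expands into
`∑ A i j * A i' j' * (b i * b i') * (c j * c j')`. Independence factors the expectation of each
term as `E[b i * b i'] * E[c j * c j'] = δ i i' * δ j j'`, so the expectation is `∑ A i j ^ 2`,
which expands to the stated formula. The inequality then follows since the cross term is a square.
-/

open MeasureTheory ProbabilityTheory

noncomputable section

def dotp {n : ℕ} (a v : Fin n → ℝ) : ℝ := ∑ i, a i * v i

open Finset

lemma ProbabilityTheory.HasLaw.integral_sq_gaussianReal {Ω : Type*} {m : MeasurableSpace Ω}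
    {P : Measure Ω} [IsProbabilityMeasure P] {X : Ω → ℝ} {μ : ℝ} {v : NNReal}
    (hX : HasLaw X (gaussianReal μ v) P) : P[X ^ 2] = v + μ ^ 2 := by
  have h := variance_eq_sub hX.hasGaussianLaw.memLp_two
  rw [hX.variance_eq, variance_id_gaussianReal, hX.integral_eq, integral_id_gaussianReal] at h
  linarith

lemma ProbabilityTheory.HasLaw.integral_gaussianReal {Ω : Type*} {m : MeasurableSpace Ω}
    {P : Measure Ω} {X : Ω → ℝ} {μ : ℝ} {v : NNReal}
    (hX : HasLaw X (gaussianReal μ v) P) : P[X] = μ := by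
  rw [hX.integral_eq, integral_id_gaussianReal]

lemma integral_sq_sum_of_orthogonal {Ω α : Type*} {m : MeasurableSpace Ω} {P : Measure Ω}
    {s : Finset α} {f : α → Ω → ℝ}
    (hint : ∀ p ∈ s, ∀ q ∈ s, Integrable (fun ω => f p ω * f q ω) P)
    (horth : ∀ p ∈ s, ∀ q ∈ s, p ≠ q → ∫ ω, f p ω * f q ω ∂P = 0) :
    ∫ ω, (∑ p ∈ s, f p ω) ^ 2 ∂P = ∑ p ∈ s, ∫ ω, f p ω ^ 2 ∂P := by
  simp_rw [sq, sum_mul_sum]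
  rw [integral_finsetSum _ fun p hp => integrable_finsetSum _ fun q hq => hint p hp q hq]
  refine sum_congr rfl fun p hp => ?_
  rw [integral_finsetSum _ fun q hq => hint p hp q hq]
  exact sum_eq_single_of_mem p hp fun q hq hqp => horth p hp q hq hqp.symm

namespace ProbabilityTheory.iIndepFun

variable {Ω ι κ : Type*} {m : MeasurableSpace Ω} {P : Measure Ω}

lemma integral_mul_eq_zero {X : ι → Ω → ℝ} (hX : iIndepFun X P)
    (hmeas : ∀ p, AEStronglyMeasurable (X p) P) (hmean : ∀ p, P[X p] = 0) {p q : ι}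
    (hpq : p ≠ q) : ∫ ω, X p ω * X q ω ∂P = 0 := by
  rw [show (fun ω => X p ω * X q ω) = X p * X q from rfl,
    (hX.indepFun hpq).integral_mul_eq_mul_integral (hmeas p) (hmeas q), hmean p, zero_mul]

variable {X : ι → Ω → ℝ} {i j k l : ι}

lemma integrable_mul_mul (hX : iIndepFun X P) (hL2 : ∀ p, MemLp (X p) 2 P)
    (hik : i ≠ k) (hil : i ≠ l) (hjk : j ≠ k) (hjl : j ≠ l) :
    Integrable (fun ω => X i ω * X j ω * (X k ω * X l ω)) P :=
  (hX.indepFun_mul_mul₀ (fun p => (hL2 p).aemeasurable) i j k l hik hil hjk hjl).integrable_mul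
    ((hL2 i).integrable_mul (hL2 j)) ((hL2 k).integrable_mul (hL2 l))

lemma integral_mul_mul (hX : iIndepFun X P) (hL2 : ∀ p, MemLp (X p) 2 P)
    (hik : i ≠ k) (hil : i ≠ l) (hjk : j ≠ k) (hjl : j ≠ l) :
    ∫ ω, X i ω * X j ω * (X k ω * X l ω) ∂P =
      (∫ ω, X i ω * X j ω ∂P) * ∫ ω, X k ω * X l ω ∂P :=
  (hX.indepFun_mul_mul₀ (fun p => (hL2 p).aemeasurable) i j k l hik hil hjk hjl
    ).integral_mul_eq_mul_integral ((hL2 i).integrable_mul (hL2 j)).aestronglyMeasurable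
    ((hL2 k).integrable_mul (hL2 l)).aestronglyMeasurable

lemma integral_sq_sum_sum_mul [Fintype ι] [Fintype κ] {X : ι ⊕ κ → Ω → ℝ}
    (hX : iIndepFun X P) (hL2 : ∀ p, MemLp (X p) 2 P) (hmean : ∀ p, P[X p] = 0)
    (hsq : ∀ p, P[X p ^ 2] = 1) (A : ι → κ → ℝ) :
    ∫ ω, (∑ i, ∑ j, A i j * (X (.inl i) ω * X (.inr j) ω)) ^ 2 ∂P = ∑ i, ∑ j, A i j ^ 2 := by
  set f : ι × κ → Ω → ℝ := fun p ω => A p.1 p.2 * (X (.inl p.1) ω * X (.inr p.2) ω)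
  have hprod : ∀ p q, (fun ω => f p ω * f q ω) = fun ω => A p.1 p.2 * A q.1 q.2 *
      (X (.inl p.1) ω * X (.inl q.1) ω * (X (.inr p.2) ω * X (.inr q.2) ω)) := by
    intro p q; funext ω; ring
  have hint : ∀ p q, Integrable (fun ω => f p ω * f q ω) P := fun p q => by
    rw [hprod]
    exact (hX.integrable_mul_mul hL2 Sum.inl_ne_inr Sum.inl_ne_inr Sum.inl_ne_inr
      Sum.inl_ne_inr).const_mul _
  have hint_eq : ∀ p q, ∫ ω, f p ω * f q ω ∂P = A p.1 p.2 * A q.1 q.2 *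
      ((∫ ω, X (.inl p.1) ω * X (.inl q.1) ω ∂P) * ∫ ω, X (.inr p.2) ω * X (.inr q.2) ω ∂P) :=
    fun p q => by
      rw [hprod, integral_const_mul, hX.integral_mul_mul hL2 Sum.inl_ne_inr Sum.inl_ne_inr
        Sum.inl_ne_inr Sum.inl_ne_inr]
  have hmeas : ∀ p, AEStronglyMeasurable (X p) P := fun p => (hL2 p).aestronglyMeasurable
  have horth : ∀ p q, p ≠ q → ∫ ω, f p ω * f q ω ∂P = 0 := by
    rintro ⟨i, j⟩ ⟨i', j'⟩ hpq
    rw [hint_eq]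
    by_cases hi : i = i'
    · have hj : j ≠ j' := fun hj => hpq (by rw [hi, hj])
      rw [hX.integral_mul_eq_zero hmeas hmean (Sum.inr_injective.ne hj), mul_zero, mul_zero]
    · rw [hX.integral_mul_eq_zero hmeas hmean (Sum.inl_injective.ne hi), zero_mul, mul_zero]
  have hsq' : ∀ p, ∫ ω, X p ω * X p ω ∂P = 1 := fun p => by simpa [sq] using hsq p
  calc ∫ ω, (∑ i, ∑ j, A i j * (X (.inl i) ω * X (.inr j) ω)) ^ 2 ∂P
      = ∫ ω, (∑ p, f p ω) ^ 2 ∂P := by simp_rw [f, Fintype.sum_prod_type]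
    _ = ∑ p, ∫ ω, f p ω ^ 2 ∂P :=
      integral_sq_sum_of_orthogonal (fun p _ q _ => hint p q) (fun p _ q _ => horth p q)
    _ = ∑ p : ι × κ, A p.1 p.2 ^ 2 := by
      refine sum_congr rfl fun p _ => ?_
      simp_rw [sq, hint_eq, hsq', mul_one]
    _ = ∑ i, ∑ j, A i j ^ 2 := Fintype.sum_prod_type _

end ProbabilityTheory.iIndepFun

lemma dotp_mul_dotp_add_dotp_mul_dotp {K N : ℕ} (x u v : Fin K → ℝ) (y w z : Fin N → ℝ) :
    dotp x u * dotp y w + dotp x v * dotp y z =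
      ∑ i, ∑ j, (u i * w j + v i * z j) * (x i * y j) := by
  simp only [dotp, sum_mul_sum, ← sum_add_distrib]
  exact sum_congr rfl fun i _ => sum_congr rfl fun j _ => by ring

lemma sum_sum_sq_mul_add_mul {K N : ℕ} (u v : Fin K → ℝ) (w z : Fin N → ℝ) :
    ∑ i, ∑ j, (u i * w j + v i * z j) ^ 2 =
      (∑ j, w j ^ 2) * (∑ i, u i ^ 2) + (∑ j, z j ^ 2) * (∑ i, v i ^ 2)
        + 2 * dotp w z * dotp v u := by
  calc ∑ i, ∑ j, (u i * w j + v i * z j) ^ 2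
      = ∑ i, (u i ^ 2 * ∑ j, w j ^ 2 + v i ^ 2 * ∑ j, z j ^ 2 + v i * u i * (2 * dotp w z)) := by
        simp only [dotp, mul_sum, ← sum_add_distrib]
        exact sum_congr rfl fun i _ => sum_congr rfl fun j _ => by ring
    _ = _ := by simp only [sum_add_distrib, ← sum_mul, dotp]; ring

lemma min_mul_add_le_add_add_sq {H M Dh Dm : ℝ} (hDh : 0 ≤ Dh) (hDm : 0 ≤ Dm) (s : ℝ) :
    min H M * (Dh + Dm) ≤ Dm * H + M * Dh + 2 * s * s := by
  nlinarith [mul_le_mul_of_nonneg_right (min_le_left H M) hDm,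
    mul_le_mul_of_nonneg_right (min_le_right H M) hDh, mul_self_nonneg s]

theorem expected_square_bilinear {K N : ℕ} {Ω : Type*} [MeasureSpace Ω]
    [IsProbabilityMeasure (ℙ : Measure Ω)]
    (b : Ω → Fin K → ℝ) (c : Ω → Fin N → ℝ)
    (hindep : iIndepFun
      (fun p : Fin K ⊕ Fin N => fun ω => Sum.elim (b ω) (c ω) p) ℙ)
    (hdist : ∀ p : Fin K ⊕ Fin N,
      Measure.map (fun ω => Sum.elim (b ω) (c ω) p) ℙ = gaussianReal 0 1)
    (hh δh : Fin K → ℝ) (mh δm : Fin N → ℝ) :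
    (∫ ω, (dotp (b ω) hh * dotp (c ω) δm + dotp (b ω) δh * dotp (c ω) mh) ^ 2 ∂ℙ =
      (∑ j, (δm j) ^ 2) * (∑ i, (hh i) ^ 2) + (∑ j, (mh j) ^ 2) * (∑ i, (δh i) ^ 2)
        + 2 * (dotp δm mh) * (dotp δh hh)) ∧
    (dotp δh hh = dotp δm mh →
      (∫ ω, (dotp (b ω) hh * dotp (c ω) δm + dotp (b ω) δh * dotp (c ω) mh) ^ 2 ∂ℙ ≥
        min (∑ i, (hh i) ^ 2) (∑ j, (mh j) ^ 2) * ((∑ i, (δh i) ^ 2) + ∑ j, (δm j) ^ 2))) := by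
  have hlaw : ∀ p, HasLaw (fun ω => Sum.elim (b ω) (c ω) p) (gaussianReal 0 1) ℙ :=
    fun p => ⟨.of_map_ne_zero (by simp [hdist p, IsProbabilityMeasure.ne_zero]), hdist p⟩
  have hexp : ∫ ω, (dotp (b ω) hh * dotp (c ω) δm + dotp (b ω) δh * dotp (c ω) mh) ^ 2 ∂ℙ =
      (∑ j, (δm j) ^ 2) * (∑ i, (hh i) ^ 2) + (∑ j, (mh j) ^ 2) * (∑ i, (δh i) ^ 2)
        + 2 * (dotp δm mh) * (dotp δh hh) := by
    simp_rw [dotp_mul_dotp_add_dotp_mul_dotp, ← sum_sum_sq_mul_add_mul]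
    exact hindep.integral_sq_sum_sum_mul (fun p => (hlaw p).hasGaussianLaw.memLp_two)
      (fun p => by simpa using (hlaw p).integral_gaussianReal)
      (fun p => by simpa using (hlaw p).integral_sq_gaussianReal) _
  refine ⟨hexp, fun he => ?_⟩
  rw [hexp, he, ge_iff_le]
  exact min_mul_add_le_add_add_sq (sum_nonneg fun i _ => sq_nonneg _)
    (sum_nonneg fun j _ => sq_nonneg _) _

end
end
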